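/- There exists a Urysohn (S(2)) topological space X that is weakly H-closed (every infinite subset of regular cardinality has a θ-complete accumulation point) but is not H-closed (there is an open filter on X whose closures have empty intersection, equivalently X is not closed in some Hausdorff space containing it). -/

import Mathlib

open Set Topology Filter Cardinal

universe u

variable {X : Type u}

/-- `U` is an `n`-hull of `x`: there are open neighborhoods `U₁, …, Uₙ = U` of `x`
with `closure Uᵢ ⊆ Uᵢ₊₁` for `i = 1, …, n-1`. -/
def IsNHull [TopologicalSpace X] (n : ℕ) (x : X) (U : Set X) : Prop :=
  ∃ Us : ℕ → Set X, (∀ i < n, IsOpen (Us i) ∧ x ∈ Us i) ∧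
    (∀ i, i + 1 < n → closure (Us i) ⊆ Us (i + 1)) ∧ Us (n - 1) = U

/-- The `θⁿ`-closure of a set: `cl_{θ⁰} M = closure M`, and for `n ≥ 1`,
`x ∉ cl_{θⁿ} M` iff there is an `n`-hull `U` of `x` with `closure U ∩ M = ∅`. -/
def thetaCl [TopologicalSpace X] : ℕ → Set X → Set X
  | 0, M => closure M
  | (n + 1), M => {x | ∀ U : Set X, IsNHull (n + 1) x U → (closure U ∩ M).Nonempty}

/-- The `θⁿ`-interior. -/
def thetaInt [TopologicalSpace X] (n : ℕ) (M : Set X) : Set X := (thetaCl n Mᶜ)ᶜ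

/-- An `S(n)`-space: any two distinct points are `S(n)`-separated. -/
def IsSnSpace (n : ℕ) (X : Type u) [TopologicalSpace X] : Prop :=
  ∀ x y : X, x ≠ y → x ∉ thetaCl n {y}

/-- A set is `θ`-closed if it coincides with its `θ`-closure. -/
def IsThetaClosed [TopologicalSpace X] (M : Set X) : Prop := thetaCl 1 M = M

/-- An `S(n)`-closed space: its image is closed under every embedding into an `S(n)`-space. -/
def IsSnClosedSpace (n : ℕ) (X : Type u) [TopologicalSpace X] : Prop :=
  ∀ (Z : Type u) [TopologicalSpace Z], IsSnSpace n Z →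
    ∀ e : X → Z, Topology.IsEmbedding e → IsClosed (Set.range e)

/-- An `S(n)`-θ-closed space: its image is θ-closed under every embedding into an
`S(n)`-space. -/
def IsSnThetaClosedSpace (n : ℕ) (X : Type u) [TopologicalSpace X] : Prop :=
  ∀ (Z : Type u) [TopologicalSpace Z], IsSnSpace n Z →
    ∀ e : X → Z, Topology.IsEmbedding e → IsThetaClosed (Set.range e)

/-- A `θ⁰(n)`-complete accumulation point of `F`: `|F ∩ U| = |F|` for every `n`-hull `U`. -/
def IsThetaZeroCompleteAccPt [TopologicalSpace X] (n : ℕ) (F : Set X) (x : X) : Prop :=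
  ∀ U : Set X, IsNHull n x U → #(↥(F ∩ U)) = #(↥F)

/-- A `θ(n)`-complete accumulation point of `F`: `|F ∩ closure U| = |F|` for every
`n`-hull `U`. -/
def IsThetaCompleteAccPt [TopologicalSpace X] (n : ℕ) (F : Set X) (x : X) : Prop :=
  ∀ U : Set X, IsNHull n x U → #(↥(F ∩ closure U)) = #(↥F)

/-- Weakly `S(n)`-θ-closed: every infinite subset of regular cardinality has a
`θ⁰(n)`-complete accumulation point. -/
def WeaklySnThetaClosed (n : ℕ) (X : Type u) [TopologicalSpace X] : Prop :=
  ∀ F : Set X, F.Infinite → (#(↥F)).IsRegular → ∃ x : X, IsThetaZeroCompleteAccPt n F x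

/-- Weakly `S(n)`-closed: every infinite subset of regular cardinality has a
`θ(n)`-complete accumulation point. -/
def WeaklySnClosed (n : ℕ) (X : Type u) [TopologicalSpace X] : Prop :=
  ∀ F : Set X, F.Infinite → (#(↥F)).IsRegular → ∃ x : X, IsThetaCompleteAccPt n F x

/-- A (proper) open filter: a filter with a base of open sets. -/
def IsOpenFilter [TopologicalSpace X] (F : Filter X) : Prop :=
  F.NeBot ∧ ∀ s ∈ F, ∃ U ∈ F, IsOpen U ∧ U ⊆ s

/-- A (proper) closed filter: a filter with a base of closed sets. -/
def IsClosedFilter [TopologicalSpace X] (F : Filter X) : Prop :=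
  F.NeBot ∧ ∀ s ∈ F, ∃ C ∈ F, IsClosed C ∧ C ⊆ s

/-- `ad_{θⁿ} F`, the set of `θⁿ`-adherent points of a filter. -/
def adTheta [TopologicalSpace X] (n : ℕ) (F : Filter X) : Set X :=
  ⋂ s ∈ F, thetaCl n s

/-- An `S(n)`-filter: every point not adherent to `F` is `S(n)`-separated from some
element of `F`. -/
def IsSnFilter [TopologicalSpace X] (n : ℕ) (F : Filter X) : Prop :=
  ∀ x : X, x ∉ adTheta 0 F → ∃ s ∈ F, x ∉ thetaCl n s

/-- An `S(n)`-cover: an open cover such that every point lies in the `θⁿ`-interior of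
some member. -/
def IsSnCover [TopologicalSpace X] (n : ℕ) (C : Set (Set X)) : Prop :=
  (∀ U ∈ C, IsOpen U) ∧ ⋃₀ C = Set.univ ∧ ∀ x : X, ∃ U ∈ C, x ∈ thetaInt n U

/-- Linearly Lindelöf: every uncountable subset of regular cardinality has a complete
accumulation point. -/
def LinearlyLindelof (X : Type u) [TopologicalSpace X] : Prop :=
  ∀ F : Set X, ¬F.Countable → (#(↥F)).IsRegular →
    ∃ x : X, ∀ U : Set X, IsOpen U → x ∈ U → #(↥(F ∩ U)) = #(↥F)


namespace WHC

noncomputable section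

/-! ## The summable ideal -/

def zf : ℕ → ℝ := fun n => (1:ℝ)/(n+1)

lemma zf_nonneg (n : ℕ) : 0 ≤ zf n := by unfold zf; positivity

lemma ind_nonneg (A : Set ℕ) (n : ℕ) : 0 ≤ A.indicator zf n :=
  Set.indicator_nonneg (fun n _ => zf_nonneg n) n

/-- the summable ideal -/
def zid (A : Set ℕ) : Prop := Summable (A.indicator zf)

lemma zid_subset {A B : Set ℕ} (h : A ⊆ B) (hB : zid B) : zid A := by
  refine Summable.of_nonneg_of_le (fun n => ind_nonneg A n) (fun n => ?_) hB
  by_cases hn : n ∈ A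
  · rw [Set.indicator_of_mem hn, Set.indicator_of_mem (h hn)]
  · rw [Set.indicator_of_notMem hn]; exact ind_nonneg B n

lemma zid_union {A B : Set ℕ} (hA : zid A) (hB : zid B) : zid (A ∪ B) := by
  refine Summable.of_nonneg_of_le (fun n => ind_nonneg _ n) (fun n => ?_) (hA.add hB)
  by_cases hn : n ∈ A ∪ B
  · rw [Set.indicator_of_mem hn]
    rcases hn with hn | hn
    · have h2 := ind_nonneg B n
      rw [Set.indicator_of_mem hn]
      linarith
    · have h2 := ind_nonneg A n
      rw [Set.indicator_of_mem hn]
      linarith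
  · rw [Set.indicator_of_notMem hn]
    exact add_nonneg (ind_nonneg A n) (ind_nonneg B n)

lemma zid_finite {A : Set ℕ} (hA : A.Finite) : zid A := by
  classical
  refine summable_of_ne_finset_zero (s := hA.toFinset) (fun b hb => ?_)
  rw [Set.Finite.mem_toFinset] at hb
  exact Set.indicator_of_notMem hb _

lemma zid_empty : zid (∅ : Set ℕ) := zid_finite finite_empty

lemma zid_singleton (i : ℕ) : zid ({i} : Set ℕ) := zid_finite (finite_singleton i)

lemma not_zid_univ : ¬ zid (Set.univ : Set ℕ) := by
  intro h
  rw [zid, Set.indicator_univ] at h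
  have h1 : Summable (fun n : ℕ => (1:ℝ)/(n:ℝ)) := by
    rw [← summable_nat_add_iff 1]
    refine h.congr (fun n => ?_)
    unfold zf
    push_cast
    ring
  exact Real.not_summable_one_div_natCast h1

lemma not_zid_compl {A : Set ℕ} (hA : zid A) : ¬ zid Aᶜ := by
  intro h
  exact not_zid_univ (by simpa [Set.union_compl_self] using zid_union hA h)

lemma zid_tall {B : Set ℕ} (hB : B.Infinite) : ∃ Z, Z ⊆ B ∧ Z.Infinite ∧ zid Z := by
  classical
  have hB' : (setOf (· ∈ B)).Infinite := hB
  have hmono : StrictMono (Nat.nth (· ∈ B)) := Nat.nth_strictMono hB'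
  set g : ℕ → ℕ := fun k => Nat.nth (· ∈ B) (2^k) with hg
  have hginj : Function.Injective g := by
    intro a b hab
    have := hmono.injective hab
    exact Nat.pow_right_injective (le_refl 2) this
  have hgB : ∀ k, g k ∈ B := fun k => Nat.nth_mem_of_infinite hB' (2^k)
  have hgge : ∀ k, 2^k ≤ g k := fun k => hmono.le_apply
  refine ⟨Set.range g, ?_, Set.infinite_range_of_injective hginj, ?_⟩
  · rintro x ⟨k, rfl⟩; exact hgB k
  · rw [zid, ← Function.Injective.summable_iff hginj
      (fun x hx => Set.indicator_of_notMem hx _)]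
    refine Summable.of_nonneg_of_le (fun k => ?_) (fun k => ?_) summable_geometric_two
    · exact ind_nonneg _ _
    · have h1 : (Set.range g).indicator zf (g k) = zf (g k) :=
        Set.indicator_of_mem (Set.mem_range_self k) _
      show (Set.range g).indicator zf (g k) ≤ (1/2)^k
      rw [h1]
      unfold zf
      have h2 : ((2:ℝ))^k ≤ (g k : ℝ) + 1 := by
        have h3 : ((2:ℕ)^k : ℝ) ≤ (g k : ℝ) := by exact_mod_cast hgge k
        push_cast at h3
        linarith
      calc (1:ℝ)/((g k : ℝ)+1) ≤ 1/(2^k) := one_div_le_one_div_of_le (by positivity) h2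
        _ = (1/2)^k := by rw [div_pow, one_pow]

/-! ## The space -/

/-- The predicate selecting the ultrafilter points: free ultrafilters containing a
summable set. -/
def SP (U : Ultrafilter ℕ) : Prop :=
  (∀ A : Set ℕ, A.Finite → A ∉ U) ∧ ∃ Z ∈ U, zid Z

inductive Sp : Type
  | h (i k : ℕ) : Sp
  | t (i : ℕ) : Sp
  | m (U : Ultrafilter ℕ) (hU : SP U) : Sp
  | p : Sp

/-- full columns over `V` -/
def cols (V : Set ℕ) : Set Sp := {x | ∃ i ∈ V, ∃ k, x = Sp.h i k}
/-- even parts of columns over `B` -/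
def ev (B : Set ℕ) : Set Sp := {x | ∃ i ∈ B, ∃ k, x = Sp.h i (2*k)}
/-- odd parts of columns over `B` -/
def od (B : Set ℕ) : Set Sp := {x | ∃ i ∈ B, ∃ k, x = Sp.h i (2*k+1)}
/-- tail of column `i` -/
def tl (i m : ℕ) : Set Sp := {x | ∃ k, m ≤ k ∧ x = Sp.h i k}

section memlemmas

@[simp] lemma h_mem_cols {i k : ℕ} {V : Set ℕ} : Sp.h i k ∈ cols V ↔ i ∈ V := by
  constructor
  · rintro ⟨i', hi', k', heq⟩
    obtain ⟨rfl, rfl⟩ : i = i' ∧ k = k' := by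
      simpa using heq
    exact hi'
  · intro h; exact ⟨i, h, k, rfl⟩

@[simp] lemma t_not_mem_cols {i : ℕ} {V : Set ℕ} : Sp.t i ∉ cols V := by
  rintro ⟨_, _, _, heq⟩; cases heq

@[simp] lemma m_not_mem_cols {U hU} {V : Set ℕ} : Sp.m U hU ∉ cols V := by
  rintro ⟨_, _, _, heq⟩; cases heq

@[simp] lemma p_not_mem_cols {V : Set ℕ} : Sp.p ∉ cols V := by
  rintro ⟨_, _, _, heq⟩; cases heq

@[simp] lemma h_mem_ev {i k : ℕ} {B : Set ℕ} :
    Sp.h i k ∈ ev B ↔ i ∈ B ∧ ∃ j, k = 2*j := by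
  constructor
  · rintro ⟨i', hi', k', heq⟩
    obtain ⟨rfl, rfl⟩ : i = i' ∧ k = 2*k' := by simpa using heq
    exact ⟨hi', k', rfl⟩
  · rintro ⟨hB, j, rfl⟩; exact ⟨i, hB, j, rfl⟩

@[simp] lemma t_not_mem_ev {i : ℕ} {B : Set ℕ} : Sp.t i ∉ ev B := by
  rintro ⟨_, _, _, heq⟩; cases heq

@[simp] lemma m_not_mem_ev {U hU} {B : Set ℕ} : Sp.m U hU ∉ ev B := by
  rintro ⟨_, _, _, heq⟩; cases heq

@[simp] lemma p_not_mem_ev {B : Set ℕ} : Sp.p ∉ ev B := by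
  rintro ⟨_, _, _, heq⟩; cases heq

@[simp] lemma h_mem_od {i k : ℕ} {B : Set ℕ} :
    Sp.h i k ∈ od B ↔ i ∈ B ∧ ∃ j, k = 2*j+1 := by
  constructor
  · rintro ⟨i', hi', k', heq⟩
    obtain ⟨rfl, rfl⟩ : i = i' ∧ k = 2*k'+1 := by simpa using heq
    exact ⟨hi', k', rfl⟩
  · rintro ⟨hB, j, rfl⟩; exact ⟨i, hB, j, rfl⟩

@[simp] lemma t_not_mem_od {i : ℕ} {B : Set ℕ} : Sp.t i ∉ od B := by
  rintro ⟨_, _, _, heq⟩; cases heq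

@[simp] lemma m_not_mem_od {U hU} {B : Set ℕ} : Sp.m U hU ∉ od B := by
  rintro ⟨_, _, _, heq⟩; cases heq

@[simp] lemma p_not_mem_od {B : Set ℕ} : Sp.p ∉ od B := by
  rintro ⟨_, _, _, heq⟩; cases heq

@[simp] lemma h_mem_tl {i k j m : ℕ} : Sp.h i k ∈ tl j m ↔ i = j ∧ m ≤ k := by
  constructor
  · rintro ⟨k', hk', heq⟩
    obtain ⟨rfl, rfl⟩ : i = j ∧ k = k' := by simpa using heq
    exact ⟨rfl, hk'⟩
  · rintro ⟨rfl, hm⟩; exact ⟨k, hm, rfl⟩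

@[simp] lemma t_not_mem_tl {i j m : ℕ} : Sp.t i ∉ tl j m := by
  rintro ⟨_, _, heq⟩; cases heq

@[simp] lemma m_not_mem_tl {U hU} {j m : ℕ} : Sp.m U hU ∉ tl j m := by
  rintro ⟨_, _, heq⟩; cases heq

@[simp] lemma p_not_mem_tl {j m : ℕ} : Sp.p ∉ tl j m := by
  rintro ⟨_, _, heq⟩; cases heq

lemma cols_hairs {V : Set ℕ} : ∀ x ∈ cols V, ∃ i k, x = Sp.h i k := by
  rintro x ⟨i, _, k, rfl⟩; exact ⟨i, k, rfl⟩

lemma ev_hairs {B : Set ℕ} : ∀ x ∈ ev B, ∃ i k, x = Sp.h i k := by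
  rintro x ⟨i, _, k, rfl⟩; exact ⟨i, 2*k, rfl⟩

lemma od_hairs {B : Set ℕ} : ∀ x ∈ od B, ∃ i k, x = Sp.h i k := by
  rintro x ⟨i, _, k, rfl⟩; exact ⟨i, 2*k+1, rfl⟩

lemma tl_hairs {i m : ℕ} : ∀ x ∈ tl i m, ∃ i' k, x = Sp.h i' k := by
  rintro x ⟨k, _, rfl⟩; exact ⟨i, k, rfl⟩

lemma tl_mono {i : ℕ} {m m' : ℕ} (h : m ≤ m') : tl i m' ⊆ tl i m := by
  rintro x ⟨k, hk, rfl⟩; exact ⟨k, h.trans hk, rfl⟩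

lemma cols_mono {V W : Set ℕ} (h : V ⊆ W) : cols V ⊆ cols W := by
  rintro x ⟨i, hi, k, rfl⟩; exact ⟨i, h hi, k, rfl⟩

lemma ev_mono {V W : Set ℕ} (h : V ⊆ W) : ev V ⊆ ev W := by
  rintro x ⟨i, hi, k, rfl⟩; exact ⟨i, h hi, k, rfl⟩

lemma od_mono {V W : Set ℕ} (h : V ⊆ W) : od V ⊆ od W := by
  rintro x ⟨i, hi, k, rfl⟩; exact ⟨i, h hi, k, rfl⟩

end memlemmas

/-! ## Topology -/

def XOpen (U : Set Sp) : Prop :=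
  (∀ i, Sp.t i ∈ U → ∃ m, tl i m ⊆ U) ∧
  (∀ Uf hUf, Sp.m Uf hUf ∈ U → ∃ V ∈ Uf, cols V ⊆ U) ∧
  (Sp.p ∈ U → ∃ B : Set ℕ, zid Bᶜ ∧ ev B ⊆ U)

instance : TopologicalSpace Sp where
  IsOpen := XOpen
  isOpen_univ := by
    refine ⟨fun i _ => ⟨0, subset_univ _⟩, fun Uf hUf _ => ⟨univ, univ_mem, subset_univ _⟩,
      fun _ => ⟨univ, ?_, subset_univ _⟩⟩
    simpa using zid_empty
  isOpen_inter := by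
    rintro s u ⟨hs1, hs2, hs3⟩ ⟨hu1, hu2, hu3⟩
    refine ⟨fun i hi => ?_, fun Uf hUf hm => ?_, fun hp => ?_⟩
    · obtain ⟨m1, h1⟩ := hs1 i hi.1
      obtain ⟨m2, h2⟩ := hu1 i hi.2
      exact ⟨max m1 m2, fun x hx => ⟨h1 (tl_mono (le_max_left _ _) hx),
        h2 (tl_mono (le_max_right _ _) hx)⟩⟩
    · obtain ⟨V1, hV1, h1⟩ := hs2 Uf hUf hm.1
      obtain ⟨V2, hV2, h2⟩ := hu2 Uf hUf hm.2
      exact ⟨V1 ∩ V2, Filter.inter_mem hV1 hV2,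
        fun x hx => ⟨h1 (cols_mono inter_subset_left hx), h2 (cols_mono inter_subset_right hx)⟩⟩
    · obtain ⟨B1, hB1, h1⟩ := hs3 hp.1
      obtain ⟨B2, hB2, h2⟩ := hu3 hp.2
      refine ⟨B1 ∩ B2, ?_, fun x hx => ⟨h1 (ev_mono inter_subset_left hx),
        h2 (ev_mono inter_subset_right hx)⟩⟩
      rw [Set.compl_inter]; exact zid_union hB1 hB2
  isOpen_sUnion := by
    intro S hS
    refine ⟨fun i hi => ?_, fun Uf hUf hm => ?_, fun hp => ?_⟩
    · obtain ⟨u, hu, hiu⟩ := hi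
      obtain ⟨m, hmu⟩ := (hS u hu).1 i hiu
      exact ⟨m, hmu.trans (subset_sUnion_of_mem hu)⟩
    · obtain ⟨u, hu, hmu⟩ := hm
      obtain ⟨V, hV, hVu⟩ := (hS u hu).2.1 Uf hUf hmu
      exact ⟨V, hV, hVu.trans (subset_sUnion_of_mem hu)⟩
    · obtain ⟨u, hu, hpu⟩ := hp
      obtain ⟨B, hB, hBu⟩ := (hS u hu).2.2 hpu
      exact ⟨B, hB, hBu.trans (subset_sUnion_of_mem hu)⟩

lemma isOpen_iff {U : Set Sp} : IsOpen U ↔ XOpen U := Iff.rfl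

lemma isOpen_hairs {P : Set Sp} (hP : ∀ x ∈ P, ∃ i k, x = Sp.h i k) : IsOpen P := by
  rw [isOpen_iff]
  refine ⟨fun i hi => ?_, fun Uf hUf hm => ?_, fun hp => ?_⟩
  · obtain ⟨_, _, heq⟩ := hP _ hi; cases heq
  · obtain ⟨_, _, heq⟩ := hP _ hm; cases heq
  · obtain ⟨_, _, heq⟩ := hP _ hp; cases heq

lemma isOpen_tb (i m : ℕ) : IsOpen ({Sp.t i} ∪ tl i m) := by
  rw [isOpen_iff]
  refine ⟨fun j hj => ?_, fun Uf hUf hm => ?_, fun hp => ?_⟩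
  · rcases hj with hj | hj
    · obtain rfl : j = i := by simpa using hj
      exact ⟨m, subset_union_right⟩
    · exact absurd hj t_not_mem_tl
  · rcases hm with hm | hm
    · cases hm
    · exact absurd hm m_not_mem_tl
  · rcases hp with hp | hp
    · cases hp
    · exact absurd hp p_not_mem_tl

lemma isOpen_mb {Uf : Ultrafilter ℕ} {hUf : SP Uf} {V : Set ℕ} (hV : V ∈ Uf) :
    IsOpen ({Sp.m Uf hUf} ∪ cols V) := by
  rw [isOpen_iff]
  refine ⟨fun j hj => ?_, fun Uf' hUf' hm => ?_, fun hp => ?_⟩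
  · rcases hj with hj | hj
    · cases hj
    · exact absurd hj t_not_mem_cols
  · rcases hm with hm | hm
    · simp only [Set.mem_singleton_iff] at hm
      injection hm with h1
      subst h1
      exact ⟨V, hV, subset_union_right⟩
    · exact absurd hm m_not_mem_cols
  · rcases hp with hp | hp
    · cases hp
    · exact absurd hp p_not_mem_cols

lemma isOpen_pb {B : Set ℕ} (hB : zid Bᶜ) : IsOpen ({Sp.p} ∪ ev B) := by
  rw [isOpen_iff]
  refine ⟨fun j hj => ?_, fun Uf' hUf' hm => ?_, fun hp => ?_⟩
  · rcases hj with hj | hj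
    · cases hj
    · exact absurd hj t_not_mem_ev
  · rcases hm with hm | hm
    · cases hm
    · exact absurd hm m_not_mem_ev
  · exact ⟨B, hB, subset_union_right⟩

/-! ## Closure computations -/

lemma mem_closure_h {P : Set Sp} (hP : ∀ x ∈ P, ∃ i k, x = Sp.h i k) {i k : ℕ} :
    Sp.h i k ∈ closure P ↔ Sp.h i k ∈ P := by
  constructor
  · intro h
    have hop : IsOpen ({Sp.h i k} : Set Sp) :=
      isOpen_hairs (by rintro x rfl; exact ⟨i, k, rfl⟩)
    obtain ⟨y, hy1, hy2⟩ := mem_closure_iff.mp h _ hop rfl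
    obtain rfl : y = Sp.h i k := hy1
    exact hy2
  · exact fun h => subset_closure h

lemma mem_closure_t {P : Set Sp} (hP : ∀ x ∈ P, ∃ i k, x = Sp.h i k) {i : ℕ} :
    Sp.t i ∈ closure P ↔ ∀ m, ∃ k, m ≤ k ∧ Sp.h i k ∈ P := by
  constructor
  · intro h m
    obtain ⟨y, hy1, hy2⟩ := mem_closure_iff.mp h _ (isOpen_tb i m) (Or.inl rfl)
    rcases hy1 with hy1 | hy1
    · obtain rfl : y = Sp.t i := hy1
      obtain ⟨_, _, heq⟩ := hP _ hy2; cases heq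
    · obtain ⟨k, hk, rfl⟩ := hy1
      exact ⟨k, hk, hy2⟩
  · intro h
    rw [mem_closure_iff]
    intro o hop hio
    obtain ⟨m, hm⟩ := hop.1 i hio
    obtain ⟨k, hk1, hk2⟩ := h m
    exact ⟨Sp.h i k, hm ⟨k, hk1, rfl⟩, hk2⟩

lemma mem_closure_m {P : Set Sp} (hP : ∀ x ∈ P, ∃ i k, x = Sp.h i k)
    {Uf : Ultrafilter ℕ} {hUf : SP Uf} :
    Sp.m Uf hUf ∈ closure P ↔ ∀ V ∈ Uf, (cols V ∩ P).Nonempty := by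
  constructor
  · intro h V hV
    obtain ⟨y, hy1, hy2⟩ := mem_closure_iff.mp h _ (isOpen_mb hV) (Or.inl rfl)
    rcases hy1 with hy1 | hy1
    · obtain rfl : y = Sp.m Uf hUf := hy1
      obtain ⟨_, _, heq⟩ := hP _ hy2; cases heq
    · exact ⟨y, hy1, hy2⟩
  · intro h
    rw [mem_closure_iff]
    intro o hop hio
    obtain ⟨V, hV, hVo⟩ := hop.2.1 Uf hUf hio
    obtain ⟨y, hy1, hy2⟩ := h V hV
    exact ⟨y, hVo hy1, hy2⟩

lemma mem_closure_p {P : Set Sp} (hP : ∀ x ∈ P, ∃ i k, x = Sp.h i k) :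
    Sp.p ∈ closure P ↔ ∀ B : Set ℕ, zid Bᶜ → (ev B ∩ P).Nonempty := by
  constructor
  · intro h B hB
    obtain ⟨y, hy1, hy2⟩ := mem_closure_iff.mp h _ (isOpen_pb hB) (Or.inl rfl)
    rcases hy1 with hy1 | hy1
    · obtain rfl : y = Sp.p := hy1
      obtain ⟨_, _, heq⟩ := hP _ hy2; cases heq
    · exact ⟨y, hy1, hy2⟩
  · intro h
    rw [mem_closure_iff]
    intro o hop hio
    obtain ⟨B, hB, hBo⟩ := hop.2.2 hio
    obtain ⟨y, hy1, hy2⟩ := h B hB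
    exact ⟨y, hBo hy1, hy2⟩

/-- every singleton is closed -/
lemma isClosed_single (x : Sp) : IsClosed {x} := by
  rw [← isOpen_compl_iff, isOpen_iff]
  refine ⟨fun j hj => ?_, fun Uf' hUf' hm => ?_, fun hp => ?_⟩
  · -- need tail avoiding x
    cases x with
    | h i k =>
        refine ⟨k+1, fun y hy hxy => ?_⟩
        obtain ⟨k', hk', rfl⟩ := hy
        simp only [Set.mem_singleton_iff, Sp.h.injEq] at hxy
        omega
    | t i =>
        refine ⟨0, fun y hy hxy => ?_⟩
        obtain ⟨k', _, rfl⟩ := hy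
        cases hxy
    | m U hU =>
        refine ⟨0, fun y hy hxy => ?_⟩
        obtain ⟨k', _, rfl⟩ := hy
        cases hxy
    | p =>
        refine ⟨0, fun y hy hxy => ?_⟩
        obtain ⟨k', _, rfl⟩ := hy
        cases hxy
  · cases x with
    | h i k =>
        refine ⟨{i}ᶜ, ?_, fun y hy hxy => ?_⟩
        · rw [Ultrafilter.compl_mem_iff_notMem]
          exact hUf'.1 _ (finite_singleton i)
        · obtain ⟨i', hi', k', rfl⟩ := hy
          simp only [Set.mem_singleton_iff, Sp.h.injEq] at hxy
          exact hi' hxy.1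
    | t i =>
        refine ⟨univ, univ_mem, fun y hy hxy => ?_⟩
        obtain ⟨i', _, k', rfl⟩ := hy
        cases hxy
    | m U hU =>
        refine ⟨univ, univ_mem, fun y hy hxy => ?_⟩
        obtain ⟨i', _, k', rfl⟩ := hy
        cases hxy
    | p =>
        refine ⟨univ, univ_mem, fun y hy hxy => ?_⟩
        obtain ⟨i', _, k', rfl⟩ := hy
        cases hxy
  · cases x with
    | h i k =>
        refine ⟨{i}ᶜ, by simpa using zid_singleton i, fun y hy hxy => ?_⟩
        obtain ⟨i', hi', k', rfl⟩ := hy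
        simp only [Set.mem_singleton_iff, Sp.h.injEq] at hxy
        exact hi' hxy.1
    | t i =>
        refine ⟨univ, by simpa using zid_empty, fun y hy hxy => ?_⟩
        obtain ⟨i', _, k', rfl⟩ := hy
        cases hxy
    | m U hU =>
        refine ⟨univ, by simpa using zid_empty, fun y hy hxy => ?_⟩
        obtain ⟨i', _, k', rfl⟩ := hy
        cases hxy
    | p => exact absurd rfl hp

lemma closure_union_single (x : Sp) (P : Set Sp) :
    closure ({x} ∪ P) = {x} ∪ closure P := by
  rw [closure_union, (isClosed_single x).closure_eq]


/-! ## Closure characterizations for basic hair sets -/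

lemma uf_all_inter {Uf : Ultrafilter ℕ} {V : Set ℕ} :
    (∀ W ∈ Uf, (W ∩ V).Nonempty) ↔ V ∈ Uf := by
  constructor
  · intro h
    by_contra hV
    obtain ⟨x, hx1, hx2⟩ := h Vᶜ (Ultrafilter.compl_mem_iff_notMem.mpr hV)
    exact hx1 hx2
  · intro hV W hW
    exact Filter.nonempty_of_mem (Filter.inter_mem hW hV)

lemma zid_all_inter {V : Set ℕ} :
    (∀ B : Set ℕ, zid Bᶜ → (B ∩ V).Nonempty) ↔ ¬ zid V := by
  constructor
  · intro h hV
    obtain ⟨x, hx1, hx2⟩ := h Vᶜ (by simpa using hV)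
    exact hx1 hx2
  · intro hV B hB
    rw [Set.nonempty_iff_ne_empty]
    intro hemp
    refine hV (zid_subset (fun x hx => ?_) hB)
    by_contra hxB
    exact Set.eq_empty_iff_forall_notMem.mp hemp x ⟨not_not.mp hxB, hx⟩

lemma cols_inter_cols_nonempty {W V : Set ℕ} :
    (cols W ∩ cols V).Nonempty ↔ (W ∩ V).Nonempty := by
  constructor
  · rintro ⟨x, hx1, hx2⟩
    obtain ⟨i, k, rfl⟩ := cols_hairs x hx1
    exact ⟨i, h_mem_cols.mp hx1, h_mem_cols.mp hx2⟩
  · rintro ⟨i, hi1, hi2⟩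
    exact ⟨Sp.h i 0, h_mem_cols.mpr hi1, h_mem_cols.mpr hi2⟩

lemma cols_inter_ev_nonempty {W B : Set ℕ} :
    (cols W ∩ ev B).Nonempty ↔ (W ∩ B).Nonempty := by
  constructor
  · rintro ⟨x, hx1, hx2⟩
    obtain ⟨i, k, rfl⟩ := cols_hairs x hx1
    exact ⟨i, h_mem_cols.mp hx1, (h_mem_ev.mp hx2).1⟩
  · rintro ⟨i, hi1, hi2⟩
    exact ⟨Sp.h i (2*0), h_mem_cols.mpr hi1, h_mem_ev.mpr ⟨hi2, 0, rfl⟩⟩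

lemma cols_inter_od_nonempty {W B : Set ℕ} :
    (cols W ∩ od B).Nonempty ↔ (W ∩ B).Nonempty := by
  constructor
  · rintro ⟨x, hx1, hx2⟩
    obtain ⟨i, k, rfl⟩ := cols_hairs x hx1
    exact ⟨i, h_mem_cols.mp hx1, (h_mem_od.mp hx2).1⟩
  · rintro ⟨i, hi1, hi2⟩
    exact ⟨Sp.h i (2*0+1), h_mem_cols.mpr hi1, h_mem_od.mpr ⟨hi2, 0, rfl⟩⟩

lemma ev_inter_ev_nonempty {B' B : Set ℕ} :
    (ev B' ∩ ev B).Nonempty ↔ (B' ∩ B).Nonempty := by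
  constructor
  · rintro ⟨x, hx1, hx2⟩
    obtain ⟨i, k, rfl⟩ := ev_hairs x hx1
    exact ⟨i, (h_mem_ev.mp hx1).1, (h_mem_ev.mp hx2).1⟩
  · rintro ⟨i, hi1, hi2⟩
    exact ⟨Sp.h i (2*0), h_mem_ev.mpr ⟨hi1, 0, rfl⟩, h_mem_ev.mpr ⟨hi2, 0, rfl⟩⟩

lemma ev_inter_od_empty {B' B : Set ℕ} : ev B' ∩ od B = ∅ := by
  rw [Set.eq_empty_iff_forall_notMem]
  rintro x ⟨hx1, hx2⟩
  obtain ⟨i, k, rfl⟩ := ev_hairs x hx1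
  obtain ⟨_, j, hj⟩ := h_mem_ev.mp hx1
  obtain ⟨_, j', hj'⟩ := h_mem_od.mp hx2
  omega

-- closure of cols
lemma closure_cols_h {V : Set ℕ} {i k : ℕ} :
    Sp.h i k ∈ closure (cols V) ↔ i ∈ V := by
  rw [mem_closure_h cols_hairs, h_mem_cols]

lemma closure_cols_t {V : Set ℕ} {i : ℕ} :
    Sp.t i ∈ closure (cols V) ↔ i ∈ V := by
  rw [mem_closure_t cols_hairs]
  constructor
  · intro h
    obtain ⟨k, _, hk⟩ := h 0
    exact h_mem_cols.mp hk
  · intro h m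
    exact ⟨m, le_refl m, h_mem_cols.mpr h⟩

lemma closure_cols_m {V : Set ℕ} {Uf : Ultrafilter ℕ} {hUf : SP Uf} :
    Sp.m Uf hUf ∈ closure (cols V) ↔ V ∈ Uf := by
  rw [mem_closure_m cols_hairs]
  rw [← uf_all_inter (Uf := Uf) (V := V)]
  exact forall₂_congr (fun W _ => cols_inter_cols_nonempty)

lemma closure_cols_p {V : Set ℕ} :
    Sp.p ∈ closure (cols V) ↔ ¬ zid V := by
  rw [mem_closure_p cols_hairs, ← zid_all_inter (V := V)]
  refine forall₂_congr (fun B _ => ?_)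
  rw [Set.inter_comm (ev B), Set.inter_comm B]
  exact cols_inter_ev_nonempty

-- closure of ev
lemma closure_ev_h {B : Set ℕ} {i k : ℕ} :
    Sp.h i k ∈ closure (ev B) ↔ i ∈ B ∧ ∃ j, k = 2*j := by
  rw [mem_closure_h ev_hairs, h_mem_ev]

lemma closure_ev_t {B : Set ℕ} {i : ℕ} :
    Sp.t i ∈ closure (ev B) ↔ i ∈ B := by
  rw [mem_closure_t ev_hairs]
  constructor
  · intro h
    obtain ⟨k, _, hk⟩ := h 0
    exact (h_mem_ev.mp hk).1
  · intro h m
    exact ⟨2*m, by omega, h_mem_ev.mpr ⟨h, m, rfl⟩⟩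

lemma closure_ev_m {B : Set ℕ} {Uf : Ultrafilter ℕ} {hUf : SP Uf} :
    Sp.m Uf hUf ∈ closure (ev B) ↔ B ∈ Uf := by
  rw [mem_closure_m ev_hairs, ← uf_all_inter (Uf := Uf) (V := B)]
  exact forall₂_congr (fun W _ => cols_inter_ev_nonempty)

lemma closure_ev_p {B : Set ℕ} :
    Sp.p ∈ closure (ev B) ↔ ¬ zid B := by
  rw [mem_closure_p ev_hairs, ← zid_all_inter (V := B)]
  exact forall₂_congr (fun B' _ => ev_inter_ev_nonempty)

-- closure of od
lemma closure_od_h {B : Set ℕ} {i k : ℕ} :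
    Sp.h i k ∈ closure (od B) ↔ i ∈ B ∧ ∃ j, k = 2*j+1 := by
  rw [mem_closure_h od_hairs, h_mem_od]

lemma closure_od_t {B : Set ℕ} {i : ℕ} :
    Sp.t i ∈ closure (od B) ↔ i ∈ B := by
  rw [mem_closure_t od_hairs]
  constructor
  · intro h
    obtain ⟨k, _, hk⟩ := h 0
    exact (h_mem_od.mp hk).1
  · intro h m
    exact ⟨2*m+1, by omega, h_mem_od.mpr ⟨h, m, rfl⟩⟩

lemma closure_od_m {B : Set ℕ} {Uf : Ultrafilter ℕ} {hUf : SP Uf} :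
    Sp.m Uf hUf ∈ closure (od B) ↔ B ∈ Uf := by
  rw [mem_closure_m od_hairs, ← uf_all_inter (Uf := Uf) (V := B)]
  exact forall₂_congr (fun W _ => cols_inter_od_nonempty)

lemma closure_od_p {B : Set ℕ} : Sp.p ∉ closure (od B) := by
  rw [mem_closure_p od_hairs]
  intro h
  obtain ⟨x, hx1, hx2⟩ := h univ (by simpa using zid_empty)
  exact Set.eq_empty_iff_forall_notMem.mp ev_inter_od_empty x ⟨hx1, hx2⟩

-- closure of tl
lemma closure_tl_h {i m j k : ℕ} :
    Sp.h j k ∈ closure (tl i m) ↔ j = i ∧ m ≤ k := by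
  rw [mem_closure_h tl_hairs, h_mem_tl]

lemma closure_tl_t {i m j : ℕ} :
    Sp.t j ∈ closure (tl i m) ↔ j = i := by
  rw [mem_closure_t tl_hairs]
  constructor
  · intro h
    obtain ⟨k, _, hk⟩ := h 0
    exact (h_mem_tl.mp hk).1
  · rintro rfl m'
    exact ⟨max m m', le_max_right _ _, h_mem_tl.mpr ⟨rfl, le_max_left _ _⟩⟩

lemma closure_tl_m {i m : ℕ} {Uf : Ultrafilter ℕ} {hUf : SP Uf} :
    Sp.m Uf hUf ∉ closure (tl i m) := by
  rw [mem_closure_m tl_hairs]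
  intro h
  obtain ⟨x, hx1, hx2⟩ := h {i}ᶜ
    (Ultrafilter.compl_mem_iff_notMem.mpr (hUf.1 _ (finite_singleton i)))
  obtain ⟨i', k', rfl⟩ := tl_hairs x hx2
  exact h_mem_cols.mp hx1 (h_mem_tl.mp hx2).1

lemma closure_tl_p {i m : ℕ} : Sp.p ∉ closure (tl i m) := by
  rw [mem_closure_p tl_hairs]
  intro h
  obtain ⟨x, hx1, hx2⟩ := h {i}ᶜ (by simpa using zid_singleton i)
  obtain ⟨i', k', rfl⟩ := tl_hairs x hx2
  exact (h_mem_ev.mp hx1).1 (h_mem_tl.mp hx2).1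


/-! ## Urysohn separation -/

def Sep (x y : Sp) : Prop :=
  ∃ U V : Set Sp, IsOpen U ∧ IsOpen V ∧ x ∈ U ∧ y ∈ V ∧ closure U ∩ closure V = ∅

lemma Sep.symm {x y : Sp} (h : Sep x y) : Sep y x := by
  obtain ⟨U, V, h1, h2, h3, h4, h5⟩ := h
  exact ⟨V, U, h2, h1, h4, h3, by rw [Set.inter_comm]; exact h5⟩

lemma isOpen_hsingle (i k : ℕ) : IsOpen ({Sp.h i k} : Set Sp) :=
  isOpen_hairs (by rintro x rfl; exact ⟨i, k, rfl⟩)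

lemma sep_hh {i k i' k' : ℕ} (hne : Sp.h i k ≠ Sp.h i' k') : Sep (Sp.h i k) (Sp.h i' k') := by
  refine ⟨{Sp.h i k}, {Sp.h i' k'}, isOpen_hsingle i k, isOpen_hsingle i' k', rfl, rfl, ?_⟩
  rw [(isClosed_single _).closure_eq, (isClosed_single _).closure_eq,
    Set.eq_empty_iff_forall_notMem]
  rintro z ⟨hz1, hz2⟩
  rw [Set.mem_singleton_iff] at hz1 hz2
  exact hne (hz1.symm.trans hz2)

lemma sep_ht {i k j : ℕ} : Sep (Sp.h i k) (Sp.t j) := by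
  refine ⟨{Sp.h i k}, {Sp.t j} ∪ tl j (k+1), isOpen_hsingle i k, isOpen_tb j (k+1),
    rfl, Or.inl rfl, ?_⟩
  rw [(isClosed_single _).closure_eq, closure_union_single, Set.eq_empty_iff_forall_notMem]
  rintro z ⟨hz1, hz2⟩
  rw [Set.mem_singleton_iff] at hz1
  subst hz1
  rcases hz2 with hz2 | hz2
  · simp at hz2
  · have := closure_tl_h.mp hz2
    omega

lemma sep_hm {i k : ℕ} {Uf : Ultrafilter ℕ} {hUf : SP Uf} : Sep (Sp.h i k) (Sp.m Uf hUf) := by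
  have hmem : ({i}ᶜ : Set ℕ) ∈ Uf :=
    Ultrafilter.compl_mem_iff_notMem.mpr (hUf.1 _ (finite_singleton i))
  refine ⟨{Sp.h i k}, {Sp.m Uf hUf} ∪ cols {i}ᶜ, isOpen_hsingle i k, isOpen_mb hmem,
    rfl, Or.inl rfl, ?_⟩
  rw [(isClosed_single _).closure_eq, closure_union_single, Set.eq_empty_iff_forall_notMem]
  rintro z ⟨hz1, hz2⟩
  rw [Set.mem_singleton_iff] at hz1
  subst hz1
  rcases hz2 with hz2 | hz2
  · simp at hz2
  · exact closure_cols_h.mp hz2 rfl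

lemma sep_hp {i k : ℕ} : Sep (Sp.h i k) Sp.p := by
  have hz : zid (({i}ᶜ : Set ℕ))ᶜ := by simpa using zid_singleton i
  refine ⟨{Sp.h i k}, {Sp.p} ∪ ev {i}ᶜ, isOpen_hsingle i k, isOpen_pb hz,
    rfl, Or.inl rfl, ?_⟩
  rw [(isClosed_single _).closure_eq, closure_union_single, Set.eq_empty_iff_forall_notMem]
  rintro z ⟨hz1, hz2⟩
  rw [Set.mem_singleton_iff] at hz1
  subst hz1
  rcases hz2 with hz2 | hz2
  · simp at hz2
  · exact (closure_ev_h.mp hz2).1 rfl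

lemma sep_tt {i j : ℕ} (hij : i ≠ j) : Sep (Sp.t i) (Sp.t j) := by
  refine ⟨{Sp.t i} ∪ tl i 0, {Sp.t j} ∪ tl j 0, isOpen_tb i 0, isOpen_tb j 0,
    Or.inl rfl, Or.inl rfl, ?_⟩
  rw [closure_union_single, closure_union_single, Set.eq_empty_iff_forall_notMem]
  rintro z ⟨hz1, hz2⟩
  cases z with
  | h a b =>
      have e1 : a = i := by
        rcases hz1 with hz1 | hz1
        · simp at hz1
        · exact (closure_tl_h.mp hz1).1
      have e2 : a = j := by
        rcases hz2 with hz2 | hz2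
        · simp at hz2
        · exact (closure_tl_h.mp hz2).1
      omega
  | t a =>
      have e1 : a = i := by
        rcases hz1 with hz1 | hz1
        · simpa using hz1
        · exact closure_tl_t.mp hz1
      have e2 : a = j := by
        rcases hz2 with hz2 | hz2
        · simpa using hz2
        · exact closure_tl_t.mp hz2
      omega
  | m U0 hU0 =>
      rcases hz1 with hz1 | hz1
      · simp at hz1
      · exact closure_tl_m hz1
  | p =>
      rcases hz1 with hz1 | hz1
      · simp at hz1
      · exact closure_tl_p hz1

lemma sep_tm {i : ℕ} {Uf : Ultrafilter ℕ} {hUf : SP Uf} : Sep (Sp.t i) (Sp.m Uf hUf) := by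
  have hmem : ({i}ᶜ : Set ℕ) ∈ Uf :=
    Ultrafilter.compl_mem_iff_notMem.mpr (hUf.1 _ (finite_singleton i))
  refine ⟨{Sp.t i} ∪ tl i 0, {Sp.m Uf hUf} ∪ cols {i}ᶜ, isOpen_tb i 0, isOpen_mb hmem,
    Or.inl rfl, Or.inl rfl, ?_⟩
  rw [closure_union_single, closure_union_single, Set.eq_empty_iff_forall_notMem]
  rintro z ⟨hz1, hz2⟩
  cases z with
  | h a b =>
      have e1 : a = i := by
        rcases hz1 with hz1 | hz1
        · simp at hz1
        · exact (closure_tl_h.mp hz1).1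
      have e2 : a ≠ i := by
        rcases hz2 with hz2 | hz2
        · simp at hz2
        · simpa using closure_cols_h.mp hz2
      exact e2 e1
  | t a =>
      have e1 : a = i := by
        rcases hz1 with hz1 | hz1
        · simpa using hz1
        · exact closure_tl_t.mp hz1
      have e2 : a ≠ i := by
        rcases hz2 with hz2 | hz2
        · simp at hz2
        · simpa using closure_cols_t.mp hz2
      exact e2 e1
  | m U0 hU0 =>
      rcases hz1 with hz1 | hz1
      · simp at hz1
      · exact closure_tl_m hz1
  | p =>
      rcases hz1 with hz1 | hz1
      · simp at hz1
      · exact closure_tl_p hz1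

lemma sep_tp {i : ℕ} : Sep (Sp.t i) Sp.p := by
  have hz : zid (({i}ᶜ : Set ℕ))ᶜ := by simpa using zid_singleton i
  refine ⟨{Sp.t i} ∪ tl i 0, {Sp.p} ∪ ev {i}ᶜ, isOpen_tb i 0, isOpen_pb hz,
    Or.inl rfl, Or.inl rfl, ?_⟩
  rw [closure_union_single, closure_union_single, Set.eq_empty_iff_forall_notMem]
  rintro z ⟨hz1, hz2⟩
  cases z with
  | h a b =>
      have e1 : a = i := by
        rcases hz1 with hz1 | hz1
        · simp at hz1
        · exact (closure_tl_h.mp hz1).1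
      have e2 : a ≠ i := by
        rcases hz2 with hz2 | hz2
        · simp at hz2
        · simpa using (closure_ev_h.mp hz2).1
      exact e2 e1
  | t a =>
      have e1 : a = i := by
        rcases hz1 with hz1 | hz1
        · simpa using hz1
        · exact closure_tl_t.mp hz1
      have e2 : a ≠ i := by
        rcases hz2 with hz2 | hz2
        · simp at hz2
        · simpa using closure_ev_t.mp hz2
      exact e2 e1
  | m U0 hU0 =>
      rcases hz1 with hz1 | hz1
      · simp at hz1
      · exact closure_tl_m hz1
  | p =>
      rcases hz1 with hz1 | hz1
      · simp at hz1
      · exact closure_tl_p hz1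

lemma sep_mm {Uf Uf' : Ultrafilter ℕ} {hUf : SP Uf} {hUf' : SP Uf'}
    (hne : Uf ≠ Uf') : Sep (Sp.m Uf hUf) (Sp.m Uf' hUf') := by
  obtain ⟨W, hWUf', hWUf⟩ : ∃ W, W ∈ Uf' ∧ W ∉ Uf := by
    by_contra hcon
    push_neg at hcon
    exact hne (Ultrafilter.coe_le_coe.mp (fun s hs => hcon s hs))
  have hWc : Wᶜ ∈ Uf := Ultrafilter.compl_mem_iff_notMem.mpr hWUf
  obtain ⟨Z, hZUf, hZzid⟩ := hUf.2
  obtain ⟨Z', hZ'Uf, hZ'zid⟩ := hUf'.2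
  have hV1 : Wᶜ ∩ Z ∈ Uf := Filter.inter_mem hWc hZUf
  have hV2 : W ∩ Z' ∈ Uf' := Filter.inter_mem hWUf' hZ'Uf
  refine ⟨{Sp.m Uf hUf} ∪ cols (Wᶜ ∩ Z), {Sp.m Uf' hUf'} ∪ cols (W ∩ Z'),
    isOpen_mb hV1, isOpen_mb hV2, Or.inl rfl, Or.inl rfl, ?_⟩
  rw [closure_union_single, closure_union_single, Set.eq_empty_iff_forall_notMem]
  rintro z ⟨hz1, hz2⟩
  cases z with
  | h a b =>
      have e1 : a ∈ Wᶜ ∩ Z := by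
        rcases hz1 with hz1 | hz1
        · simp at hz1
        · exact closure_cols_h.mp hz1
      have e2 : a ∈ W ∩ Z' := by
        rcases hz2 with hz2 | hz2
        · simp at hz2
        · exact closure_cols_h.mp hz2
      exact e1.1 e2.1
  | t a =>
      have e1 : a ∈ Wᶜ ∩ Z := by
        rcases hz1 with hz1 | hz1
        · simp at hz1
        · exact closure_cols_t.mp hz1
      have e2 : a ∈ W ∩ Z' := by
        rcases hz2 with hz2 | hz2
        · simp at hz2
        · exact closure_cols_t.mp hz2
      exact e1.1 e2.1
  | m U0 hU0 =>
      rcases hz1 with hz1 | hz1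
      · rw [Set.mem_singleton_iff] at hz1
        injection hz1 with e1
        rcases hz2 with hz2 | hz2
        · rw [Set.mem_singleton_iff] at hz2
          injection hz2 with e2
          exact hne (e1.symm.trans e2)
        · have h2 : W ∩ Z' ∈ U0 := closure_cols_m.mp hz2
          rw [e1] at h2
          exact hWUf (Filter.mem_of_superset h2 inter_subset_left)
      · have h1 : Wᶜ ∩ Z ∈ U0 := closure_cols_m.mp hz1
        rcases hz2 with hz2 | hz2
        · rw [Set.mem_singleton_iff] at hz2
          injection hz2 with e2
          rw [e2] at h1
          have h2 : W ∉ Uf' :=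
            Ultrafilter.compl_mem_iff_notMem.mp (Filter.mem_of_superset h1 inter_subset_left)
          exact h2 hWUf'
        · have h2 : W ∩ Z' ∈ U0 := closure_cols_m.mp hz2
          have h3 : (Wᶜ ∩ Z) ∩ (W ∩ Z') ∈ U0 := Filter.inter_mem h1 h2
          obtain ⟨a, ha⟩ := Filter.nonempty_of_mem h3
          exact ha.1.1 ha.2.1
  | p =>
      rcases hz1 with hz1 | hz1
      · simp at hz1
      · exact closure_cols_p.mp hz1 (zid_subset inter_subset_right hZzid)

lemma sep_mp {Uf : Ultrafilter ℕ} {hUf : SP Uf} : Sep (Sp.m Uf hUf) Sp.p := by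
  obtain ⟨Z, hZUf, hZzid⟩ := hUf.2
  have hzc : zid ((Zᶜ : Set ℕ))ᶜ := by simpa using hZzid
  refine ⟨{Sp.m Uf hUf} ∪ cols Z, {Sp.p} ∪ ev Zᶜ, isOpen_mb hZUf, isOpen_pb hzc,
    Or.inl rfl, Or.inl rfl, ?_⟩
  rw [closure_union_single, closure_union_single, Set.eq_empty_iff_forall_notMem]
  rintro z ⟨hz1, hz2⟩
  cases z with
  | h a b =>
      have e1 : a ∈ Z := by
        rcases hz1 with hz1 | hz1
        · simp at hz1
        · exact closure_cols_h.mp hz1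
      have e2 : a ∈ Zᶜ := by
        rcases hz2 with hz2 | hz2
        · simp at hz2
        · exact (closure_ev_h.mp hz2).1
      exact e2 e1
  | t a =>
      have e1 : a ∈ Z := by
        rcases hz1 with hz1 | hz1
        · simp at hz1
        · exact closure_cols_t.mp hz1
      have e2 : a ∈ Zᶜ := by
        rcases hz2 with hz2 | hz2
        · simp at hz2
        · exact closure_ev_t.mp hz2
      exact e2 e1
  | m U0 hU0 =>
      have e1 : Z ∈ U0 := by
        rcases hz1 with hz1 | hz1
        · rw [Set.mem_singleton_iff] at hz1
          injection hz1 with e1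
          rw [e1]
          exact hZUf
        · exact closure_cols_m.mp hz1
      have e2 : Zᶜ ∈ U0 := by
        rcases hz2 with hz2 | hz2
        · simp at hz2
        · exact closure_ev_m.mp hz2
      exact (Ultrafilter.compl_mem_iff_notMem.mp e2) e1
  | p =>
      rcases hz1 with hz1 | hz1
      · simp at hz1
      · exact closure_cols_p.mp hz1 hZzid

theorem urysohn : ∀ x y : Sp, x ≠ y → Sep x y := by
  intro x y hxy
  cases x with
  | h i k =>
      cases y with
      | h i' k' => exact sep_hh hxy
      | t j => exact sep_ht
      | m Uf hUf => exact sep_hm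
      | p => exact sep_hp
  | t i =>
      cases y with
      | h i' k' => exact sep_ht.symm
      | t j =>
          refine sep_tt (fun h => hxy ?_)
          rw [h]
      | m Uf hUf => exact sep_tm
      | p => exact sep_tp
  | m Uf hUf =>
      cases y with
      | h i' k' => exact sep_hm.symm
      | t j => exact sep_tm.symm
      | m Uf' hUf' =>
          refine sep_mm (fun h => hxy ?_)
          subst h
          rfl
      | p => exact sep_mp
  | p =>
      cases y with
      | h i' k' => exact sep_hp.symm
      | t j => exact sep_tp.symm
      | m Uf' hUf' => exact sep_mp.symm
      | p => exact absurd rfl hxy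


/-! ## The escaping open filter -/

def Fil : Filter Sp where
  sets := {s | ∃ B : Set ℕ, zid Bᶜ ∧ od B ⊆ s}
  univ_sets := ⟨univ, by simpa using zid_empty, subset_univ _⟩
  sets_of_superset := by
    rintro s u ⟨B, hB, hBs⟩ hsu
    exact ⟨B, hB, hBs.trans hsu⟩
  inter_sets := by
    rintro s u ⟨B1, hB1, h1⟩ ⟨B2, hB2, h2⟩
    refine ⟨B1 ∩ B2, ?_, fun x hx => ⟨h1 (od_mono inter_subset_left hx),
      h2 (od_mono inter_subset_right hx)⟩⟩
    rw [Set.compl_inter]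
    exact zid_union hB1 hB2

lemma mem_Fil {s : Set Sp} : s ∈ Fil ↔ ∃ B : Set ℕ, zid Bᶜ ∧ od B ⊆ s := Iff.rfl

lemma Fil_neBot : Fil.NeBot := by
  rw [Filter.neBot_iff]
  intro hbot
  have h0 : (∅ : Set Sp) ∈ Fil := by rw [hbot]; exact Filter.mem_bot
  obtain ⟨B, hB, hBs⟩ := mem_Fil.mp h0
  have hBne : B.Nonempty := by
    rw [Set.nonempty_iff_ne_empty]
    rintro rfl
    rw [Set.compl_empty] at hB
    exact not_zid_univ hB
  obtain ⟨i, hi⟩ := hBne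
  exact hBs ⟨i, hi, 0, rfl⟩

lemma Fil_isOpenFilter : Fil.NeBot ∧ ∀ s ∈ Fil, ∃ U ∈ Fil, IsOpen U ∧ U ⊆ s := by
  refine ⟨Fil_neBot, ?_⟩
  rintro s ⟨B, hB, hBs⟩
  exact ⟨od B, ⟨B, hB, subset_rfl⟩, isOpen_hairs od_hairs, hBs⟩

lemma Fil_adherence : (⋂ s ∈ Fil, closure s) = (∅ : Set Sp) := by
  rw [Set.eq_empty_iff_forall_notMem]
  intro x hx
  rw [Set.mem_iInter₂] at hx
  cases x with
  | h i k =>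
      have hmem : od ({i}ᶜ) ∈ Fil := ⟨{i}ᶜ, by simpa using zid_singleton i, subset_rfl⟩
      have := closure_od_h.mp (hx _ hmem)
      exact this.1 rfl
  | t i =>
      have hmem : od ({i}ᶜ) ∈ Fil := ⟨{i}ᶜ, by simpa using zid_singleton i, subset_rfl⟩
      have := closure_od_t.mp (hx _ hmem)
      exact this rfl
  | m Uf hUf =>
      obtain ⟨Z, hZUf, hZzid⟩ := hUf.2
      have hmem : od (Zᶜ) ∈ Fil := ⟨Zᶜ, by simpa using hZzid, subset_rfl⟩
      have h1 : Zᶜ ∈ Uf := closure_od_m.mp (hx _ hmem)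
      exact Ultrafilter.compl_mem_iff_notMem.mp h1 hZUf
  | p =>
      have hmem : od univ ∈ Fil := ⟨univ, by simpa using zid_empty, subset_rfl⟩
      exact closure_od_p (hx _ hmem)


/-! ## Weakly H-closed -/

def Hs : Set Sp := {x | ∃ i k, x = Sp.h i k}
def Ts : Set Sp := {x | ∃ i, x = Sp.t i}
def Ms : Set Sp := {x | ∃ (Uf : Ultrafilter ℕ) (hUf : SP Uf), x = Sp.m Uf hUf}

lemma Hs_countable : Hs.Countable := by
  refine (countable_range (fun p : ℕ × ℕ => Sp.h p.1 p.2)).mono ?_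
  rintro x ⟨i, k, rfl⟩
  exact ⟨(i, k), rfl⟩

lemma Ts_countable : Ts.Countable := by
  refine (countable_range Sp.t).mono ?_
  rintro x ⟨i, rfl⟩
  exact ⟨i, rfl⟩

lemma cover (F : Set Sp) :
    F ⊆ ((F ∩ Hs) ∪ (F ∩ Ts) ∪ (F ∩ Ms) ∪ (F ∩ {Sp.p})) := by
  intro x hx
  cases x with
  | h i k => exact Or.inl (Or.inl (Or.inl ⟨hx, i, k, rfl⟩))
  | t i => exact Or.inl (Or.inl (Or.inr ⟨hx, i, rfl⟩))
  | m Uf hUf => exact Or.inl (Or.inr ⟨hx, Uf, hUf, rfl⟩)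
  | p => exact Or.inr ⟨hx, rfl⟩

/-- SP ultrafilter members are infinite -/
lemma SP.mem_infinite {x : Ultrafilter ℕ} (h : SP x) {A : Set ℕ} (hA : A ∈ x) :
    A.Infinite := by
  exact fun hfin => h.1 A hfin hA

/-- existence of an SP ultrafilter containing a given infinite summable set -/
lemma exists_SP_uf {Z : Set ℕ} (hZinf : Z.Infinite) (hZzid : zid Z) :
    ∃ x : Ultrafilter ℕ, SP x ∧ Z ∈ x := by
  have hne : (Filter.cofinite ⊓ 𝓟 Z).NeBot := by
    rw [inf_principal_neBot_iff]
    intro W hW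
    have hWc : Wᶜ.Finite := hW
    have := (hZinf.diff hWc).nonempty
    obtain ⟨a, ha⟩ := this
    exact ⟨a, by simpa using ha.2, ha.1⟩
  obtain ⟨x, hx⟩ := Ultrafilter.exists_le (Filter.cofinite ⊓ 𝓟 Z)
  have hZx : Z ∈ x := le_principal_iff.mp (hx.trans inf_le_right)
  have hfree : ∀ A : Set ℕ, A.Finite → A ∉ x := by
    intro A hA hAx
    have hAc : Aᶜ ∈ x := (hx.trans inf_le_left) (by simpa using hA)
    obtain ⟨a, ha⟩ := Filter.nonempty_of_mem (Filter.inter_mem hAx hAc)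
    exact ha.2 ha.1
  exact ⟨x, ⟨hfree, Z, hZx, hZzid⟩, hZx⟩

lemma card_eq_of_infinite_subset {F G : Set Sp} (hκ : #(↥F) = ℵ₀) (hsub : G ⊆ F)
    (hG : G.Infinite) : #(↥G) = #(↥F) := by
  refine le_antisymm (Cardinal.mk_le_mk_of_subset hsub) ?_
  rw [hκ]
  exact Cardinal.infinite_iff.mp (Set.infinite_coe_iff.mpr hG)

/-- key injection: many ultrafilter points in the closure of `cols W` -/
lemma card_le_capture_cols {F : Set Sp} {W : Set ℕ} {U : Set Sp}
    (hsub : cols W ⊆ U) :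
    #(↥{Uf : Ultrafilter ℕ | (∃ hUf : SP Uf, Sp.m Uf hUf ∈ F) ∧ W ∈ Uf})
      ≤ #(↥(F ∩ closure U)) := by
  have hcl : closure (cols W) ⊆ closure U := closure_mono hsub
  refine Cardinal.mk_le_of_injective
    (f := fun q => (⟨Sp.m q.1 q.2.1.choose,
      q.2.1.choose_spec, hcl (closure_cols_m.mpr q.2.2)⟩ : ↥(F ∩ closure U))) ?_
  intro a b hab
  simp only [Subtype.mk.injEq] at hab
  injection hab with e
  injection e with e2
  exact Subtype.ext e2

lemma card_le_capture_ev {F : Set Sp} {B : Set ℕ} {U : Set Sp}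
    (hsub : ev B ⊆ U) :
    #(↥{Uf : Ultrafilter ℕ | (∃ hUf : SP Uf, Sp.m Uf hUf ∈ F) ∧ B ∈ Uf})
      ≤ #(↥(F ∩ closure U)) := by
  have hcl : closure (ev B) ⊆ closure U := closure_mono hsub
  refine Cardinal.mk_le_of_injective
    (f := fun q => (⟨Sp.m q.1 q.2.1.choose,
      q.2.1.choose_spec, hcl (closure_ev_m.mpr q.2.2)⟩ : ↥(F ∩ closure U))) ?_
  intro a b hab
  simp only [Subtype.mk.injEq] at hab
  injection hab with e
  injection e with e2
  exact Subtype.ext e2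

def colOf : Sp → ℕ
  | Sp.h i _ => i
  | Sp.t i => i
  | _ => 0

def ufOf : Sp → Ultrafilter ℕ
  | Sp.m Uf _ => Uf
  | _ => (pure 0 : Ultrafilter ℕ)

theorem weakly : ∀ F : Set Sp, F.Infinite → (#(↥F)).IsRegular →
    ∃ x : Sp, ∀ U : Set Sp, IsOpen U → x ∈ U → #(↥(F ∩ closure U)) = #(↥F) := by
  intro F hFinf hreg
  set κ := #(↥F) with hκdef
  have hκω : ℵ₀ ≤ κ := hreg.aleph0_le
  have hκpos : 0 < κ := lt_of_lt_of_le Cardinal.aleph0_pos hκω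
  set idx : Set (Ultrafilter ℕ) := {Uf | ∃ hUf : SP Uf, Sp.m Uf hUf ∈ F} with hidxdef
  -- smallness
  set sm : Set ℕ → Prop := fun W => #(↥{Uf : Ultrafilter ℕ | Uf ∈ idx ∧ W ∈ Uf}) < κ
    with hsmdef
  have hsm_empty : sm ∅ := by
    have : {Uf : Ultrafilter ℕ | Uf ∈ idx ∧ (∅ : Set ℕ) ∈ Uf} = ∅ := by
      rw [Set.eq_empty_iff_forall_notMem]
      rintro Uf ⟨_, hmem⟩
      exact Filter.empty_notMem _ hmem
    rw [hsmdef]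
    simp only [this, Cardinal.mk_emptyCollection]
    exact hκpos
  have hsm_mono : ∀ {A B : Set ℕ}, A ⊆ B → sm B → sm A := by
    intro A B hAB hB
    refine lt_of_le_of_lt (Cardinal.mk_le_mk_of_subset ?_) hB
    rintro Uf ⟨h1, h2⟩
    exact ⟨h1, Filter.mem_of_superset h2 hAB⟩
  have hsm_union : ∀ {A B : Set ℕ}, sm A → sm B → sm (A ∪ B) := by
    intro A B hA hB
    have hsub : {Uf : Ultrafilter ℕ | Uf ∈ idx ∧ A ∪ B ∈ Uf} ⊆
        {Uf : Ultrafilter ℕ | Uf ∈ idx ∧ A ∈ Uf} ∪ {Uf : Ultrafilter ℕ | Uf ∈ idx ∧ B ∈ Uf} := by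
      rintro Uf ⟨h1, h2⟩
      rcases Ultrafilter.union_mem_iff.mp h2 with h3 | h3
      · exact Or.inl ⟨h1, h3⟩
      · exact Or.inr ⟨h1, h3⟩
    calc #(↥{Uf : Ultrafilter ℕ | Uf ∈ idx ∧ A ∪ B ∈ Uf})
        ≤ #(↥({Uf : Ultrafilter ℕ | Uf ∈ idx ∧ A ∈ Uf} ∪
            {Uf : Ultrafilter ℕ | Uf ∈ idx ∧ B ∈ Uf})) := Cardinal.mk_le_mk_of_subset hsub
      _ ≤ #(↥{Uf : Ultrafilter ℕ | Uf ∈ idx ∧ A ∈ Uf}) +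
            #(↥{Uf : Ultrafilter ℕ | Uf ∈ idx ∧ B ∈ Uf}) := Cardinal.mk_union_le _ _
      _ < κ := Cardinal.add_lt_of_lt hκω hA hB
  have hsm_nonempty : ∀ {A : Set ℕ}, ¬ sm A → A.Nonempty := by
    intro A hA
    have hne : {Uf : Ultrafilter ℕ | Uf ∈ idx ∧ A ∈ Uf}.Nonempty := by
      rw [Set.nonempty_iff_ne_empty]
      intro hemp
      refine hA ?_
      rw [hsmdef]
      simp only [hemp, Cardinal.mk_emptyCollection]
      exact hκpos
    obtain ⟨Uf, _, hAUf⟩ := hne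
    exact Filter.nonempty_of_mem hAUf
  by_cases hbig : κ ≤ #(↥idx)
  · -- main ultrafilter case
    by_cases hZex : ∃ Z : Set ℕ, zid Z ∧ ¬ sm Z
    · obtain ⟨Z, hZzid, hZbig⟩ := hZex
      -- the filter of co-small sets
      let G : Filter ℕ :=
        { sets := {W | sm Wᶜ}
          univ_sets := by
            show sm (Set.univ)ᶜ
            rw [Set.compl_univ]
            exact hsm_empty
          sets_of_superset := by
            intro s u hs hsu
            exact hsm_mono (Set.compl_subset_compl.mpr hsu) hs
          inter_sets := by
            intro s u hs hu
            show sm (s ∩ u)ᶜ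
            rw [Set.compl_inter]
            exact hsm_union hs hu }
      have hGmem : ∀ {W : Set ℕ}, W ∈ G ↔ sm Wᶜ := fun {W} => Iff.rfl
      have hGsplit : ∀ {W : Set ℕ}, W ∈ G → ¬ sm (W ∩ Z) := by
        intro W hW hWZ
        refine hZbig (lt_of_le_of_lt
          (le_trans (Cardinal.mk_le_mk_of_subset ?_) (Cardinal.mk_union_le _ _))
          (Cardinal.add_lt_of_lt hκω hWZ hW))
        rintro Uf ⟨h1, h2⟩
        rcases Ultrafilter.mem_or_compl_mem Uf W with h3 | h3
        · exact Or.inl ⟨h1, Filter.inter_mem h3 h2⟩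
        · exact Or.inr ⟨h1, h3⟩
      have hL : (G ⊓ 𝓟 Z).NeBot := by
        rw [inf_principal_neBot_iff]
        intro W hW
        exact hsm_nonempty (hGsplit hW)
      obtain ⟨x, hx⟩ := Ultrafilter.exists_le (G ⊓ 𝓟 Z)
      have hZx : Z ∈ x := le_principal_iff.mp (hx.trans inf_le_right)
      have hxpos : ∀ W ∈ x, ¬ sm W := by
        intro W hWx hsmW
        have hWc : Wᶜ ∈ (x : Filter ℕ) := (hx.trans inf_le_left) (by
          show sm Wᶜᶜ
          rwa [compl_compl])
        obtain ⟨a, ha⟩ := Filter.nonempty_of_mem (Filter.inter_mem hWx hWc)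
        exact ha.2 ha.1
      have hxSP : SP x := by
        refine ⟨fun A hA hAx => ?_, Z, hZx, hZzid⟩
        refine hxpos A hAx ?_
        have hemp : {Uf : Ultrafilter ℕ | Uf ∈ idx ∧ A ∈ Uf} = ∅ := by
          rw [Set.eq_empty_iff_forall_notMem]
          rintro Uf ⟨⟨hSPUf, _⟩, hAUf⟩
          exact hSPUf.1 A hA hAUf
        rw [hsmdef]
        simp only [hemp, Cardinal.mk_emptyCollection]
        exact hκpos
      refine ⟨Sp.m x hxSP, ?_⟩
      intro U hUop hUm
      obtain ⟨V, hVx, hVU⟩ := hUop.2.1 x hxSP hUm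
      refine le_antisymm (Cardinal.mk_le_mk_of_subset inter_subset_left) ?_
      exact le_trans (not_lt.mp (hxpos V hVx)) (card_le_capture_cols hVU)
    · -- case (b): capture by p
      push_neg at hZex
      refine ⟨Sp.p, ?_⟩
      intro U hUop hUp
      obtain ⟨B, hBc, hBU⟩ := hUop.2.2 hUp
      have hBbig : ¬ sm B := by
        intro hsmB
        have hsub : idx ⊆ {Uf : Ultrafilter ℕ | Uf ∈ idx ∧ B ∈ Uf} ∪
            {Uf : Ultrafilter ℕ | Uf ∈ idx ∧ Bᶜ ∈ Uf} := by
          intro Uf hUf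
          rcases Ultrafilter.mem_or_compl_mem Uf B with h | h
          · exact Or.inl ⟨hUf, h⟩
          · exact Or.inr ⟨hUf, h⟩
        have : κ ≤ #(↥{Uf : Ultrafilter ℕ | Uf ∈ idx ∧ B ∈ Uf}) +
            #(↥{Uf : Ultrafilter ℕ | Uf ∈ idx ∧ Bᶜ ∈ Uf}) :=
          le_trans hbig (le_trans (Cardinal.mk_le_mk_of_subset hsub) (Cardinal.mk_union_le _ _))
        exact absurd this (not_le.mpr (Cardinal.add_lt_of_lt hκω hsmB (hZex Bᶜ hBc)))
      refine le_antisymm (Cardinal.mk_le_mk_of_subset inter_subset_left) ?_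
      exact le_trans (not_lt.mp hBbig) (card_le_capture_ev hBU)
  · -- κ = ℵ₀ case
    have hidxsm : #(↥idx) < κ := not_le.mp hbig
    have hMs_le : #(↥(F ∩ Ms)) ≤ #(↥idx) := by
      have hinj : Set.InjOn ufOf (F ∩ Ms) := by
        rintro x ⟨hxF, Ufx, hUfx, rfl⟩ y ⟨hyF, Ufy, hUfy, rfl⟩ hxy
        simp only [ufOf] at hxy
        subst hxy
        rfl
      have himg : ufOf '' (F ∩ Ms) ⊆ idx := by
        rintro _ ⟨x, ⟨hxF, Ufx, hUfx, rfl⟩, rfl⟩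
        exact ⟨hUfx, hxF⟩
      calc #(↥(F ∩ Ms)) = #(↥(ufOf '' (F ∩ Ms))) :=
            (Cardinal.mk_image_eq_of_injOn _ _ hinj).symm
        _ ≤ #(↥idx) := Cardinal.mk_le_mk_of_subset himg
    have hκℵ : κ = ℵ₀ := by
      by_contra hne
      have hlt : ℵ₀ < κ := lt_of_le_of_ne hκω (Ne.symm hne)
      have hHs : #(↥(F ∩ Hs)) < κ :=
        lt_of_le_of_lt
          (@Cardinal.mk_le_aleph0 _ ((Hs_countable.mono inter_subset_right).to_subtype)) hlt
      have hTs : #(↥(F ∩ Ts)) < κ :=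
        lt_of_le_of_lt
          (@Cardinal.mk_le_aleph0 _ ((Ts_countable.mono inter_subset_right).to_subtype)) hlt
      have hMs : #(↥(F ∩ Ms)) < κ := lt_of_le_of_lt hMs_le hidxsm
      have hpp : #(↥(F ∩ {Sp.p})) < κ := by
        refine lt_of_le_of_lt (Cardinal.mk_le_mk_of_subset inter_subset_right) ?_
        rw [Cardinal.mk_singleton]
        exact lt_of_lt_of_le Cardinal.one_lt_aleph0 hκω
      have hsum : κ ≤ #(↥(F ∩ Hs)) + #(↥(F ∩ Ts)) + #(↥(F ∩ Ms)) + #(↥(F ∩ {Sp.p})) :=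
        le_trans (Cardinal.mk_le_mk_of_subset (cover F))
          (le_trans (Cardinal.mk_union_le _ _)
            (add_le_add (le_trans (Cardinal.mk_union_le _ _)
              (add_le_add (Cardinal.mk_union_le _ _) le_rfl)) le_rfl))
      exact absurd hsum (not_le.mpr (Cardinal.add_lt_of_lt hκω
        (Cardinal.add_lt_of_lt hκω (Cardinal.add_lt_of_lt hκω hHs hTs) hMs) hpp))
    have hMsfin : (F ∩ Ms).Finite := by
      rw [← Cardinal.lt_aleph0_iff_set_finite]
      exact lt_of_le_of_lt hMs_le (hκℵ ▸ hidxsm)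
    have hpfin : (F ∩ {Sp.p}).Finite := (finite_singleton Sp.p).inter_of_right F
    have hor : (F ∩ Hs).Infinite ∨ (F ∩ Ts).Infinite := by
      by_contra hcon
      push_neg at hcon
      obtain ⟨h1, h2⟩ := hcon
      exact hFinf (Set.Finite.subset (((h1.union h2).union hMsfin).union hpfin) (cover F))
    rcases hor with hA1 | hA2
    · -- many hair points
      by_cases hcol : ∃ i, {k | Sp.h i k ∈ F}.Infinite
      · obtain ⟨i, hi⟩ := hcol
        refine ⟨Sp.t i, ?_⟩
        intro U hUop hUt
        obtain ⟨m0, hm0⟩ := hUop.1 i hUt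
        have hS : ((fun k => Sp.h i k) '' ({k | Sp.h i k ∈ F} \ Set.Iio m0)).Infinite := by
          refine Set.Infinite.image ?_ (hi.diff (Set.finite_Iio m0))
          intro a _ b _ hab
          simpa using hab
        have hsub : ((fun k => Sp.h i k) '' ({k | Sp.h i k ∈ F} \ Set.Iio m0))
            ⊆ F ∩ closure U := by
          rintro _ ⟨k, ⟨hkF, hk2⟩, rfl⟩
          refine ⟨hkF, subset_closure (hm0 ⟨k, ?_, rfl⟩)⟩
          simpa using hk2
        exact card_eq_of_infinite_subset hκℵ inter_subset_left (hS.mono hsub)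
      · push_neg at hcol
        set Bs : Set ℕ := {i | ∃ k, Sp.h i k ∈ F} with hBsdef
        have hBsinf : Bs.Infinite := by
          by_contra hfin
          rw [Set.not_infinite] at hfin
          have hsub : F ∩ Hs ⊆ ⋃ i ∈ Bs, (fun k => Sp.h i k) '' {k | Sp.h i k ∈ F} := by
            rintro x ⟨hxF, i, k, rfl⟩
            exact Set.mem_biUnion ⟨k, hxF⟩ ⟨k, hxF, rfl⟩
          refine hA1 (Set.Finite.subset
            (Set.Finite.biUnion hfin (fun i _ => Set.Finite.image _ ?_)) hsub)
          exact hcol i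
        obtain ⟨Z, hZB, hZinf, hZzid⟩ := zid_tall hBsinf
        obtain ⟨x, hxSP, hZx⟩ := exists_SP_uf hZinf hZzid
        refine ⟨Sp.m x hxSP, ?_⟩
        intro U hUop hUm
        obtain ⟨V, hVx, hVU⟩ := hUop.2.1 x hxSP hUm
        have hVZ : (V ∩ Z).Infinite := hxSP.mem_infinite (Filter.inter_mem hVx hZx)
        classical
        set f : ℕ → Sp := fun i =>
          if hi : ∃ k, Sp.h i k ∈ F then Sp.h i hi.choose else Sp.h i 0 with hfdef
        have hfcol : ∀ i, colOf (f i) = i := by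
          intro i
          rw [hfdef]
          by_cases hi : ∃ k, Sp.h i k ∈ F
          · simp only [dif_pos hi]
            rfl
          · simp only [dif_neg hi]
            rfl
        have hfinj : Function.Injective f := Function.LeftInverse.injective hfcol
        have hsub : f '' (V ∩ Z) ⊆ F ∩ closure U := by
          rintro _ ⟨i, hiVZ, rfl⟩
          have hiB : ∃ k, Sp.h i k ∈ F := hZB hiVZ.2
          refine ⟨?_, subset_closure (hVU ?_)⟩
          · rw [hfdef]
            simp only [dif_pos hiB]
            exact hiB.choose_spec
          · rw [hfdef]
            simp only [dif_pos hiB]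
            exact h_mem_cols.mpr hiVZ.1
        exact card_eq_of_infinite_subset hκℵ inter_subset_left
          ((hVZ.image hfinj.injOn).mono hsub)
    · -- many t points
      set Bs : Set ℕ := {i | Sp.t i ∈ F} with hBsdef
      have hBsinf : Bs.Infinite := by
        by_contra hfin
        rw [Set.not_infinite] at hfin
        have hsub : F ∩ Ts ⊆ Sp.t '' Bs := by
          rintro x ⟨hxF, i, rfl⟩
          exact ⟨i, hxF, rfl⟩
        exact hA2 ((hfin.image _).subset hsub)
      obtain ⟨Z, hZB, hZinf, hZzid⟩ := zid_tall hBsinf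
      obtain ⟨x, hxSP, hZx⟩ := exists_SP_uf hZinf hZzid
      refine ⟨Sp.m x hxSP, ?_⟩
      intro U hUop hUm
      obtain ⟨V, hVx, hVU⟩ := hUop.2.1 x hxSP hUm
      have hVZ : (V ∩ Z).Infinite := hxSP.mem_infinite (Filter.inter_mem hVx hZx)
      have hsub : Sp.t '' (V ∩ Z) ⊆ F ∩ closure U := by
        rintro _ ⟨i, hiVZ, rfl⟩
        exact ⟨hZB hiVZ.2, (closure_mono hVU) (closure_cols_t.mpr hiVZ.1)⟩
      have htinj : Function.Injective Sp.t := by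
        intro a b hab
        injection hab
      exact card_eq_of_infinite_subset hκℵ inter_subset_left
        ((hVZ.image htinj.injOn).mono hsub)


end

end WHC


/-- there is a Urysohn space that is weakly `H`-closed (every infinite set
of regular cardinality has a θ-complete accumulation point) but not `H`-closed (some open
filter has empty adherence). -/
theorem exists_urysohn_weaklyHClosed_not_HClosed :
    ∃ (X : Type) (_ : TopologicalSpace X),
      (∀ x y : X, x ≠ y → ∃ U V : Set X, IsOpen U ∧ IsOpen V ∧ x ∈ U ∧ y ∈ V ∧
        closure U ∩ closure V = ∅) ∧
      (∀ F : Set X, F.Infinite → (#(↥F)).IsRegular →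
        ∃ x : X, ∀ U : Set X, IsOpen U → x ∈ U → #(↥(F ∩ closure U)) = #(↥F)) ∧
      (∃ F : Filter X, IsOpenFilter F ∧ (⋂ s ∈ F, closure s) = (∅ : Set X)) := by
  refine ⟨WHC.Sp, inferInstance, ?_, ?_, ?_⟩
  · intro x y hxy
    exact WHC.urysohn x y hxy
  · exact WHC.weakly
  · exact ⟨WHC.Fil, WHC.Fil_isOpenFilter, WHC.Fil_adherence⟩
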